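/- arXiv:1705.02468 — 4 statements merged into one kernel-verified Lean document; each statement's English description precedes it below -/
import Mathlib

section
/- Let W and T be real symmetric positive definite n×n matrices and α > 0. Then the spectral radius of G_α = (W + αT)^{-1} (T - αW) (αW + T)^{-1} (W - αT) is strictly less than 1. -/
/-!
With `R = W^{1/2}` and `S = R⁻¹ T R⁻¹` (again positive definite), each of the four factors of
`G_α` is `R p(S) R` or its inverse for an affine `p`, so `G_α = R⁻¹ g(S) R` with
`g(μ) = (μ - α)(1 - αμ) / ((1 + αμ)(α + μ))`. The eigenvalues of `G_α` are therefore the real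
numbers `g(μ)`, `μ > 0` an eigenvalue of `S`, and `|μ - α| < α + μ`, `|1 - αμ| < 1 + αμ` give
`|g(μ)| < 1`.
-/

open Matrix Polynomial
open scoped ENNReal MatrixOrder

lemma spectralRadius_lt_of_spectrum_subset_range {𝕜 A ι : Type*} [NormedField 𝕜] [Ring A]
    [Algebra 𝕜 A] [Fintype ι] {a : A} {c : ι → 𝕜} {r : ℝ≥0∞} (hr : 0 < r)
    (ha : spectrum 𝕜 a ⊆ Set.range c) (hc : ∀ i, (‖c i‖₊ : ℝ≥0∞) < r) :
    spectralRadius 𝕜 a < r :=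
  calc spectralRadius 𝕜 a ≤ ⨆ i, (‖c i‖₊ : ℝ≥0∞) := iSup₂_le fun k hk => by
        obtain ⟨i, rfl⟩ := ha hk
        exact le_iSup (fun i => (‖c i‖₊ : ℝ≥0∞)) i
    _ < r := by
        rw [← Finset.sup_univ_eq_iSup, Finset.sup_lt_iff hr]
        exact fun i _ => hc i

section

variable {n : Type*} [Fintype n] [DecidableEq n]

lemma spectrum_map_ofReal_subset_of_charpoly_eq {M : Matrix n n ℝ} {c : n → ℝ}
    (hM : M.charpoly = ∏ i, (X - C (c i))) :
    spectrum ℂ (M.map Complex.ofReal) ⊆ Set.range fun i => (c i : ℂ) := by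
  intro z hz
  rw [mem_spectrum_iff_isRoot_charpoly] at hz
  change IsRoot (M.map Complex.ofRealHom).charpoly z at hz
  rw [charpoly_map, hM, Polynomial.map_prod, IsRoot, eval_prod, Finset.prod_eq_zero_iff] at hz
  obtain ⟨i, -, hi⟩ := hz
  exact ⟨i, by simpa [sub_eq_zero, eq_comm] using hi⟩

lemma exists_mul_self_and_conj_posDef {W T : Matrix n n ℝ} (hW : W.PosDef) (hT : T.PosDef) :
    ∃ R S : Matrix n n ℝ, IsUnit R ∧ S.PosDef ∧ W = R * R ∧ T = R * S * R := by
  set R := CFC.sqrt W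
  have hR : IsUnit R := CFC.isUnit_sqrt_iff_isStrictlyPositive.mpr hW.isStrictlyPositive
  have hRh : R.IsHermitian := (CFC.sqrt_nonneg W).posSemidef.isHermitian
  refine ⟨R, R⁻¹ * T * R⁻¹, hR, ?_, (CFC.sqrt_mul_sqrt_self W hW.posSemidef.nonneg).symm, ?_⟩
  · have hinj : Function.Injective R⁻¹.mulVec :=
      mulVec_injective_iff_isUnit.mpr (isUnit_nonsing_inv_iff.mpr hR)
    have := hT.conjTranspose_mul_mul_same hinj
    rwa [conjTranspose_nonsing_inv, hRh.eq] at this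
  · have hR' : IsUnit R.det := (isUnit_iff_isUnit_det R).mp hR
    rw [mul_assoc, nonsing_inv_mul_cancel_right _ _ hR', mul_nonsing_inv_cancel_left _ _ hR']

section Congruence

variable {R S : Matrix n n ℝ}

lemma smul_mul_self_add_smul_eq_mul_cfc_mul (hS : S.IsHermitian) (a b : ℝ) :
    a • (R * R) + b • (R * S * R) = R * cfc (fun x => a + b * x) S * R := by
  rw [cfc_add .., cfc_const_mul .., cfc_const .., cfc_id' .., Algebra.algebraMap_eq_smul_one]
  simp only [mul_add, add_mul, mul_smul_comm, smul_mul_assoc, mul_one]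

lemma mul_cfc_mul_inv (hS : S.IsHermitian) {f : ℝ → ℝ} (hf : ∀ x ∈ spectrum ℝ S, f x ≠ 0) :
    (R * cfc f S * R)⁻¹ = R⁻¹ * cfc (fun x => (f x)⁻¹) S * R⁻¹ := by
  rw [Matrix.mul_inv_rev, Matrix.mul_inv_rev, nonsing_inv_eq_ringInverse (cfc f S),
    ← cfc_inv f S hf (S.finite_real_spectrum.continuousOn _), mul_assoc]

lemma charpoly_inv_mul_cfc_mul (hR : IsUnit R) (hS : S.IsHermitian) (f : ℝ → ℝ) :
    (R⁻¹ * cfc f S * R).charpoly = ∏ i, (X - C (f (hS.eigenvalues i))) := by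
  rw [mul_assoc, charpoly_mul_comm, mul_assoc,
    mul_nonsing_inv _ ((isUnit_iff_isUnit_det R).mp hR), mul_one, hS.charpoly_cfc_eq]
  rfl

end Congruence

noncomputable def tscspSymbol (α x : ℝ) : ℝ := (x - α) * (1 - α * x) / ((1 + α * x) * (α + x))

lemma abs_tscspSymbol_lt_one {α x : ℝ} (hα : 0 < α) (hx : 0 < x) : |tscspSymbol α x| < 1 := by
  have hαx : 0 < α * x := mul_pos hα hx
  have h₁ : |x - α| < α + x := abs_sub_lt_iff.mpr ⟨by linarith, by linarith⟩
  have h₂ : |1 - α * x| < 1 + α * x := abs_sub_lt_iff.mpr ⟨by linarith, by linarith⟩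
  rw [tscspSymbol, abs_div, abs_mul, abs_of_pos (by positivity : 0 < (1 + α * x) * (α + x)),
    div_lt_one (by positivity)]
  calc |x - α| * |1 - α * x| < (α + x) * (1 + α * x) :=
        mul_lt_mul'' h₁ h₂ (abs_nonneg _) (abs_nonneg _)
    _ = (1 + α * x) * (α + x) := mul_comm _ _

lemma cfc_tscspSymbol (S : Matrix n n ℝ) (α : ℝ) :
    cfc (tscspSymbol α) S = cfc (fun x => (1 + α * x)⁻¹) S * cfc (fun x => x - α) S *
      cfc (fun x => (α + x)⁻¹) S * cfc (fun x => 1 - α * x) S := by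
  have hcont (f : ℝ → ℝ) : ContinuousOn f (spectrum ℝ S) := S.finite_real_spectrum.continuousOn f
  rw [← cfc_mul _ _ S (hcont _) (hcont _), ← cfc_mul _ _ S (hcont _) (hcont _),
    ← cfc_mul _ _ S (hcont _) (hcont _)]
  congr 1
  funext x
  rw [tscspSymbol, div_eq_mul_inv, mul_inv]
  ring

lemma tscsp_iteration_eq_inv_mul_cfc_mul {R S : Matrix n n ℝ} (hR : IsUnit R) (hS : S.PosDef)
    {α : ℝ} (hα : 0 < α) :
    (R * R + α • (R * S * R))⁻¹ * (R * S * R - α • (R * R)) * (α • (R * R) + R * S * R)⁻¹ *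
      (R * R - α • (R * S * R)) = R⁻¹ * cfc (tscspSymbol α) S * R := by
  have hspec : ∀ x ∈ spectrum ℝ S, 0 < x := fun x hx => hS.isStrictlyPositive.spectrum_pos hx
  have pencil := smul_mul_self_add_smul_eq_mul_cfc_mul (R := R) hS.isHermitian
  have e₁ : R * R + α • (R * S * R) = R * cfc (fun x => 1 + α * x) S * R := by
    simpa using pencil 1 α
  have e₂ : R * S * R - α • (R * R) = R * cfc (fun x => x - α) S * R := by
    simpa [sub_eq_neg_add] using pencil (-α) 1
  have e₃ : α • (R * R) + R * S * R = R * cfc (fun x => α + x) S * R := by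
    simpa using pencil α 1
  have e₄ : R * R - α • (R * S * R) = R * cfc (fun x => 1 - α * x) S * R := by
    simpa [sub_eq_add_neg] using pencil 1 (-α)
  have hR' : IsUnit R.det := (isUnit_iff_isUnit_det R).mp hR
  rw [e₁, e₂, e₃, e₄, mul_cfc_mul_inv hS.isHermitian fun x hx => (by nlinarith [hspec x hx]),
    mul_cfc_mul_inv hS.isHermitian fun x hx => (by nlinarith [hspec x hx]),
    cfc_tscspSymbol S α]
  simp only [mul_assoc, nonsing_inv_mul_cancel_left _ _ hR', mul_nonsing_inv_cancel_left _ _ hR']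

end

theorem stmt1 {n : ℕ} (W T : Matrix (Fin n) (Fin n) ℝ)
    (hW : W.PosDef) (hT : T.PosDef) (α : ℝ) (hα : 0 < α) :
    spectralRadius ℂ (((W + α • T)⁻¹ * (T - α • W) * (α • W + T)⁻¹ * (W - α • T)).map
      Complex.ofReal) < 1 := by
  obtain ⟨R, S, hR, hS, rfl, rfl⟩ := exists_mul_self_and_conj_posDef hW hT
  rw [tscsp_iteration_eq_inv_mul_cfc_mul hR hS hα]
  refine spectralRadius_lt_of_spectrum_subset_range one_pos
    (spectrum_map_ofReal_subset_of_charpoly_eq (charpoly_inv_mul_cfc_mul hR hS.isHermitian _))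
    fun i => ?_
  rw [Complex.nnnorm_real]
  exact_mod_cast abs_tscspSymbol_lt_one hα (hS.eigenvalues_pos i)
end

section
/- Let 0 < γ ≤ δ and let η > 0 satisfy (−γ² + ηγ − 1)/(γ² + ηγ + 1) = (δ² − ηδ + 1)/(δ² + ηδ + 1). Then η² = (1 + γ²)(1 + δ²)/(γδ). -/
theorem stmt13 (γ δ : ℝ) (hγ : 0 < γ) (hγδ : γ ≤ δ) (η : ℝ) (hη : 0 < η)
    (heq : (-γ ^ 2 + η * γ - 1) / (γ ^ 2 + η * γ + 1)
      = (δ ^ 2 - η * δ + 1) / (δ ^ 2 + η * δ + 1)) :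
    η ^ 2 = (1 + γ ^ 2) * (1 + δ ^ 2) / (γ * δ) := by
  have hδ : 0 < δ := lt_of_lt_of_le hγ hγδ
  have d1 : (0:ℝ) < γ ^ 2 + η * γ + 1 := by positivity
  have d2 : (0:ℝ) < δ ^ 2 + η * δ + 1 := by positivity
  have key : (-γ ^ 2 + η * γ - 1) * (δ ^ 2 + η * δ + 1)
      = (δ ^ 2 - η * δ + 1) * (γ ^ 2 + η * γ + 1) := by
    field_simp at heq
    linarith [heq]
  rw [eq_div_iff (by positivity : γ * δ ≠ 0)]
  nlinarith [mul_pos hγ hδ, sq_nonneg (γ - δ), sq_nonneg (γ + δ)]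
end

section
/- Let 0 < γ ≤ δ, η = sqrt((1+γ²)(1+δ²)/(γδ)), and α_opt = (η + sqrt(η²−4))/2. Then |λ_γ(α_opt)| = |λ_δ(α_opt)| = |(δ² − ηδ + 1)/(δ² + ηδ + 1)|, where λ_μ(α) = (α² − (μ + 1/μ)α + 1)/(α² + (μ + 1/μ)α + 1). -/
theorem stmt14 (γ δ : ℝ) (hγ : 0 < γ) (hγδ : γ ≤ δ)
    (η : ℝ) (hη : η = Real.sqrt ((1 + γ ^ 2) * (1 + δ ^ 2) / (γ * δ)))
    (αopt : ℝ) (hopt : αopt = (η + Real.sqrt (η ^ 2 - 4)) / 2)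
    (lam : ℝ → ℝ → ℝ)
    (hlam : ∀ μ α : ℝ, lam μ α = (α ^ 2 - (μ + 1 / μ) * α + 1) / (α ^ 2 + (μ + 1 / μ) * α + 1)) :
    |lam γ αopt| = |lam δ αopt| ∧
    |lam δ αopt| = |(δ ^ 2 - η * δ + 1) / (δ ^ 2 + η * δ + 1)| := by
  have hδ : 0 < δ := lt_of_lt_of_le hγ hγδ
  set a := γ + 1 / γ with ha
  set b := δ + 1 / δ with hb
  have ha2 : 2 ≤ a := by
    rw [ha]
    nlinarith [sq_nonneg (γ - 1), mul_one_div_cancel hγ.ne', one_div_pos.mpr hγ]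
  have hb2 : 2 ≤ b := by
    rw [hb]
    nlinarith [sq_nonneg (δ - 1), mul_one_div_cancel hδ.ne', one_div_pos.mpr hδ]
  have harg : (1 + γ ^ 2) * (1 + δ ^ 2) / (γ * δ) = a * b := by
    rw [ha, hb]; field_simp; ring
  have hab4 : 4 ≤ a * b := by nlinarith
  have hη2 : η ^ 2 = a * b := by
    rw [hη, Real.sq_sqrt (by rw [harg]; linarith), harg]
  have hηnn : 0 ≤ η := by rw [hη]; exact Real.sqrt_nonneg _
  have hη2' : 2 ≤ η := by nlinarith
  set s := Real.sqrt (η ^ 2 - 4) with hsdef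
  have hs : s ^ 2 = η ^ 2 - 4 := Real.sq_sqrt (by nlinarith)
  have hsnn : 0 ≤ s := Real.sqrt_nonneg _
  have hαpos : 0 < αopt := by rw [hopt]; nlinarith
  have hαeq : αopt ^ 2 + 1 = η * αopt := by
    rw [hopt]; linear_combination hs / 4
  have key : ∀ c : ℝ, (αopt ^ 2 - c * αopt + 1) / (αopt ^ 2 + c * αopt + 1)
      = (η - c) / (η + c) := by
    intro c
    have h1 : αopt ^ 2 - c * αopt + 1 = (η - c) * αopt := by linear_combination hαeq
    have h2 : αopt ^ 2 + c * αopt + 1 = (η + c) * αopt := by linear_combination hαeq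
    rw [h1, h2, mul_div_mul_right _ _ hαpos.ne']
  have hlγ : lam γ αopt = (η - a) / (η + a) := by rw [hlam, key]
  have hlδ : lam δ αopt = (η - b) / (η + b) := by rw [hlam, key]
  have hpa : 0 < η + a := by linarith
  have hpb : 0 < η + b := by linarith
  constructor
  · rw [hlγ, hlδ, abs_div, abs_div, abs_of_pos hpa, abs_of_pos hpb,
      div_eq_div_iff hpa.ne' hpb.ne', ← abs_of_pos hpb, ← abs_of_pos hpa,
      ← abs_mul, ← abs_mul]
    have e1 : (η - a) * (η + b) = η * (b - a) := by linear_combination hη2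
    have e2 : (η - b) * (η + a) = η * (a - b) := by linear_combination hη2
    rw [e1, e2, abs_mul, abs_mul, abs_sub_comm]
  · have hd1 : δ ^ 2 - η * δ + 1 = (b - η) * δ := by
      rw [hb]; field_simp; ring
    have hd2 : δ ^ 2 + η * δ + 1 = (b + η) * δ := by
      rw [hb]; field_simp; ring
    rw [hlδ, hd1, hd2, mul_div_mul_right _ _ hδ.ne']
    have : (η - b) / (η + b) = -((b - η) / (b + η)) := by
      rw [neg_div', neg_sub]; ring_nf
    rw [this, abs_neg]
end

section
/- Let W be a real symmetric positive definite n×n matrix and T a real symmetric positive semidefinite n×n matrix with T singular, and let α > 0. Then the spectral radius of G_α = (W + αT)^{-1}(T − αW)(αW + T)^{-1}(W − αT) equals at least |λ| where λ is the eigenvalue of G_α corresponding to a zero eigenvalue μ = 0 of S = W^{-1/2} T W^{-1/2}, namely λ = ((0 − α)(1 − 0))/((0 + α)(1 + 0)) = −1; in particular ρ(G_α) ≥ 1 and the TSCSP iteration fails to converge. -/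
/-!
A vector `v` in the kernel of `T` is an eigenvector of `G_α` for the eigenvalue `-1`: both
factors `W - αT` and `T - αW` act on the relevant vectors through `W` alone, and the two inverses
undo `αW + T` and `W + αT` on `W v`. Positivity of `W` and `T` is needed only to make these
inverses exist. A real eigenvalue stays in the complex spectrum, so `ρ(G_α) ≥ |-1| = 1`.
-/

open Matrix

namespace Matrix

variable {ι K : Type*} [Fintype ι] [DecidableEq ι]

theorem inv_mulVec_eq_of_mulVec_eq [CommRing K] {A : Matrix ι ι K} (hA : IsUnit A.det)
    {v w : ι → K} (h : A *ᵥ v = w) : A⁻¹ *ᵥ w = v := by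
  rw [← h, mulVec_mulVec, nonsing_inv_mul _ hA, one_mulVec]

theorem mem_spectrum_of_mulVec_eq_smul [CommRing K] {A : Matrix ι ι K} {v : ι → K} {μ : K}
    (hv : v ≠ 0) (h : A *ᵥ v = μ • v) : μ ∈ spectrum K A := by
  rw [← spectrum_toLin']
  exact (Module.End.hasEigenvalue_of_hasEigenvector
    ⟨Module.End.mem_eigenspace_iff.mpr (by simpa using h), hv⟩).mem_spectrum

theorem map_mem_spectrum_map [Field K] {L : Type*} [Field L] (f : K →+* L) {A : Matrix ι ι K}
    {μ : K} (h : μ ∈ spectrum K A) : f μ ∈ spectrum L (A.map f) := by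
  rw [mem_spectrum_iff_isRoot_charpoly] at h ⊢
  rw [charpoly_map]
  exact h.map

theorem mulVec_eq_neg_of_mulVec_eq_zero [Field K] {W T : Matrix ι ι K} {α : K} (hα : α ≠ 0)
    (hWT : IsUnit (W + α • T).det) (hTW : IsUnit (α • W + T).det) {v : ι → K}
    (hv : T *ᵥ v = 0) :
    ((W + α • T)⁻¹ * (T - α • W) * (α • W + T)⁻¹ * (W - α • T)) *ᵥ v = -v := by
  have h₁ : (W - α • T) *ᵥ v = W *ᵥ v := by
    rw [sub_mulVec, smul_mulVec, hv, smul_zero, sub_zero]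
  have h₂ : (α • W + T)⁻¹ *ᵥ (W *ᵥ v) = α⁻¹ • v := by
    refine inv_mulVec_eq_of_mulVec_eq hTW ?_
    rw [mulVec_smul, add_mulVec, hv, add_zero, smul_mulVec, smul_smul, inv_mul_cancel₀ hα,
      one_smul]
  have h₃ : (T - α • W) *ᵥ (α⁻¹ • v) = -(W *ᵥ v) := by
    rw [mulVec_smul, sub_mulVec, hv, zero_sub, smul_neg, smul_mulVec, smul_smul,
      inv_mul_cancel₀ hα, one_smul]
  have h₄ : (W + α • T)⁻¹ *ᵥ -(W *ᵥ v) = -v := by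
    refine inv_mulVec_eq_of_mulVec_eq hWT ?_
    rw [mulVec_neg, add_mulVec, smul_mulVec, hv, smul_zero, add_zero]
  simp only [← mulVec_mulVec]
  rw [h₁, h₂, h₃, h₄]

end Matrix

theorem le_spectralRadius_of_mem_spectrum {𝕜 A : Type*} [NormedField 𝕜] [Ring A] [Algebra 𝕜 A]
    {a : A} {k : 𝕜} (hk : k ∈ spectrum 𝕜 a) : (‖k‖₊ : ENNReal) ≤ spectralRadius 𝕜 a :=
  le_of_not_gt fun h => hk (spectrum.mem_resolventSet_of_spectralRadius_lt h)

theorem stmt16 {n : ℕ} (W T : Matrix (Fin n) (Fin n) ℝ) (hW : W.PosDef)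
    (hT : T.PosSemidef) (hTsing : T.det = 0) (α : ℝ) (hα : 0 < α) :
    (((0 : ℝ) - α) * (1 - α * 0)) / (((0 : ℝ) + α) * (1 + α * 0)) = -1 ∧
    (-1 : ℂ) ∈ spectrum ℂ
      (((W + α • T)⁻¹ * (T - α • W) * (α • W + T)⁻¹ * (W - α • T)).map Complex.ofReal) ∧
    1 ≤ spectralRadius ℂ
      (((W + α • T)⁻¹ * (T - α • W) * (α • W + T)⁻¹ * (W - α • T)).map Complex.ofReal) := by
  obtain ⟨v, hv₀, hTv⟩ := exists_mulVec_eq_zero_iff.mpr hTsing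
  have hWT : IsUnit (W + α • T).det :=
    (hW.add_posSemidef (hT.smul hα.le)).det_pos.ne'.isUnit
  have hTW : IsUnit (α • W + T).det :=
    ((hW.smul hα).add_posSemidef hT).det_pos.ne'.isUnit
  have hreal := mem_spectrum_of_mulVec_eq_smul hv₀
    ((mulVec_eq_neg_of_mulVec_eq_zero hα.ne' hWT hTW hTv).trans (neg_one_smul ℝ v).symm)
  have hcomplex : (-1 : ℂ) ∈ spectrum ℂ
      (((W + α • T)⁻¹ * (T - α • W) * (α • W + T)⁻¹ * (W - α • T)).map Complex.ofReal) := by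
    rw [← Complex.ofReal_one, ← Complex.ofReal_neg]
    exact map_mem_spectrum_map Complex.ofRealHom hreal
  refine ⟨by field_simp; ring, hcomplex, ?_⟩
  simpa using le_spectralRadius_of_mem_spectrum hcomplex
end
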